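/- Let L ∈ 𝐋 and let γ : [0,1] → 𝐋 satisfy γ(0) = L and d_ABW(γ(u), γ(v)) = |u−v|·d_ABW(γ(0), γ(1)) for all u, v ∈ [0,1] (i.e., γ induces a constant speed geodesic in the quotient space 𝐋/𝐎). Then there exists V ∈ 𝐕(L) such that d_ABW(γ(u), L+uV) = 0 for every u ∈ [0,1]; that is, every constant speed geodesic emanating from [L] is a displacement interpolation [L+uV] for some V ∈ 𝐕(L). -/

import Mathlib

/-!
Represent `[γ 1]` by `γ 1 * Q` with `Q` optimal for `d_ABW(γ 0, γ 1)`. For every `u`, the geodesic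
identity `d(γ 0, γ u) + d(γ u, γ 1) = d(γ 0, γ 1)` turns the triangle inequality for suitable
representatives into an equality, and strict convexity of the Frobenius norm then puts a
representative of `[γ u]` at `γ 0 + u • (γ 1 * Q - γ 0)` for some optimal `Q`. The set of such `Q`
is closed in the compact set `𝐎` and grows with `u` (the same argument for the triangle
`[γ 0], [γ u], [γ v]`), so a single `Q` serves every `u ∈ (0, 1]`.
-/

open Matrix Filter Topology

/-- Square matrices of size `dT × dT`, indexed by blocks: index `(t, i)` is
row/column `i` within block `t`. -/
abbrev Mat (d T : ℕ) := Matrix (Fin T × Fin d) (Fin T × Fin d) ℝ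

/-- The `t`-th diagonal `d × d` block of a `dT × dT` matrix. -/
def blk {d T : ℕ} (A : Mat d T) (t : Fin T) : Matrix (Fin d) (Fin d) ℝ :=
  fun i j => A (t, i) (t, j)

/-- The `t`-th block column of a `dT × dT` matrix, a `dT × d` matrix. -/
def colBlk {d T : ℕ} (A : Mat d T) (t : Fin T) : Matrix (Fin T × Fin d) (Fin d) ℝ :=
  fun p j => A p (t, j)

/-- Membership in `𝐋`: block lower triangular matrices. -/
def memL {d T : ℕ} (A : Mat d T) : Prop :=
  ∀ (t s : Fin T) (i j : Fin d), t < s → A (t, i) (s, j) = 0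

/-- Membership in `𝐎`: block diagonal matrices with orthogonal `d × d` diagonal blocks
(equivalently: block diagonal and orthogonal). -/
def memO {d T : ℕ} (O : Mat d T) : Prop :=
  (∀ (t s : Fin T) (i j : Fin d), t ≠ s → O (t, i) (s, j) = 0) ∧ Oᵀ * O = 1

/-- The Frobenius norm of a real matrix. -/
noncomputable def frobNorm {m n : Type*} [Fintype m] [Fintype n] (A : Matrix m n ℝ) : ℝ :=
  Real.sqrt (∑ i, ∑ j, (A i j) ^ 2)

/-- The Frobenius inner product of two real matrices. -/
noncomputable def frobInner {m n : Type*} [Fintype m] [Fintype n] (A B : Matrix m n ℝ) : ℝ :=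
  ∑ i, ∑ j, A i j * B i j

/-- The adapted Bures–Wasserstein distance `d_ABW(L, M) = inf_{O ∈ 𝐎} ‖L - M O‖_F`. -/
noncomputable def dABW {d T : ℕ} (L M : Mat d T) : ℝ :=
  sInf {r : ℝ | ∃ O : Mat d T, memO O ∧ r = frobNorm (L - M * O)}

/-- The set `𝐎*(L, M)` of optimizers of `inf_{O ∈ 𝐎} ‖L - M O‖_F`. -/
noncomputable def OStar {d T : ℕ} (L M : Mat d T) : Set (Mat d T) :=
  {O | memO O ∧ frobNorm (L - M * O) = dABW L M}

/-- The set `𝐕(L) = {M P - L : M ∈ 𝐋, P ∈ 𝐎*(L, M)}`. -/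
noncomputable def VSet {d T : ℕ} (L : Mat d T) : Set (Mat d T) :=
  {V | ∃ M P : Mat d T, memL M ∧ P ∈ OStar L M ∧ V = M * P - L}

/-- The set `𝒱(L) = {V ∈ 𝐋 : (Vᵀ L)_{t,t} is symmetric for all t}`. -/
def calV {d T : ℕ} (L : Mat d T) : Set (Mat d T) :=
  {V | memL V ∧ ∀ t : Fin T, (blk (Vᵀ * L) t).IsSymm}

/-- The set `𝐋^reg = {L ∈ 𝐋 : (Lᵀ L)_{t,t} is positive definite for all t}`. -/
def LReg {d T : ℕ} : Set (Mat d T) :=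
  {L | memL L ∧ ∀ t : Fin T, (blk (Lᵀ * L) t).PosDef}

/-- The positive semidefinite square root, as defined in the older Mathlib (since removed). -/
noncomputable def Matrix.PosSemidef.sqrt {n : Type*} [Fintype n] [DecidableEq n]
    {A : Matrix n n ℝ} (hA : A.PosSemidef) : Matrix n n ℝ :=
  (hA.1.eigenvectorUnitary : Matrix n n ℝ) * diagonal ((↑) ∘ (√·) ∘ hA.1.eigenvalues) *
    (star (hA.1.eigenvectorUnitary : Matrix n n ℝ))

/-- The sum of the singular values of a real square matrix `A`,
i.e. the trace of the positive semidefinite square root of `Aᵀ A`. -/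
noncomputable def svSum {n : ℕ} (A : Matrix (Fin n) (Fin n) ℝ) : ℝ :=
  (Matrix.posSemidef_conjTranspose_mul_self A).sqrt.trace

/-- The operator norm of a real matrix: the supremum of the euclidean norm `‖A x‖₂`
over the euclidean unit ball. -/
noncomputable def opNorm {m n : Type*} [Fintype m] [Fintype n] (A : Matrix m n ℝ) : ℝ :=
  sSup {r : ℝ | ∃ x : n → ℝ, (∑ j, (x j) ^ 2) ≤ 1 ∧ r = Real.sqrt (∑ i, (A.mulVec x i) ^ 2)}

section Frobenius

variable {m n : Type*} [Fintype m] [Fintype n]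

noncomputable def frobEquiv : Matrix m n ℝ ≃ₗ[ℝ] EuclideanSpace ℝ (m × n) :=
  (LinearEquiv.curry ℝ ℝ m n).symm.trans (WithLp.linearEquiv 2 ℝ (m × n → ℝ)).symm

lemma frobNorm_eq_norm (A : Matrix m n ℝ) : frobNorm A = ‖frobEquiv A‖ := by
  simp [frobNorm, EuclideanSpace.norm_eq, Fintype.sum_prod_type]
  rfl

lemma frobNorm_sub_eq_dist (A B : Matrix m n ℝ) :
    frobNorm (A - B) = dist (frobEquiv A) (frobEquiv B) := by
  rw [frobNorm_eq_norm, map_sub, dist_eq_norm]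

lemma frobNorm_smul (r : ℝ) (A : Matrix m n ℝ) : frobNorm (r • A) = |r| * frobNorm A := by
  rw [frobNorm_eq_norm, frobNorm_eq_norm, map_smul, norm_smul, Real.norm_eq_abs]

lemma frobNorm_sub_le (A B C : Matrix m n ℝ) :
    frobNorm (A - C) ≤ frobNorm (A - B) + frobNorm (B - C) := by
  simp only [frobNorm_sub_eq_dist]
  exact dist_triangle _ _ _

lemma continuous_frobNorm : Continuous (frobNorm : Matrix m n ℝ → ℝ) := by
  simp only [funext frobNorm_eq_norm]
  exact continuous_norm.comp (LinearMap.continuous_of_finiteDimensional frobEquiv.toLinearMap)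

lemma sum_sq_eq_trace_mul_transpose (A : Matrix m n ℝ) :
    ∑ i, ∑ j, A i j ^ 2 = (A * Aᵀ).trace := by
  simp [Matrix.trace, Matrix.mul_apply, sq]

lemma frobNorm_mul_of_mul_transpose_eq_one [DecidableEq n] (A : Matrix m n ℝ)
    {O : Matrix n n ℝ} (hO : O * Oᵀ = 1) : frobNorm (A * O) = frobNorm A := by
  rw [frobNorm, frobNorm, sum_sq_eq_trace_mul_transpose, sum_sq_eq_trace_mul_transpose,
    transpose_mul, Matrix.mul_assoc, ← Matrix.mul_assoc O, hO, Matrix.one_mul]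

/-- Strict convexity of the (euclidean) Frobenius norm. -/
lemma eq_add_smul_of_frobNorm_eq {A B C : Matrix m n ℝ} {s : ℝ}
    (hAB : frobNorm (A - B) = s * frobNorm (A - C))
    (hBC : frobNorm (B - C) = (1 - s) * frobNorm (A - C)) : B = A + s • (C - A) := by
  simp only [frobNorm_sub_eq_dist] at hAB hBC
  apply frobEquiv.injective
  rw [eq_lineMap_of_dist_eq_mul_of_dist_eq_mul hAB hBC, AffineMap.lineMap_apply, map_add,
    map_smul, map_sub, vsub_eq_sub, vadd_eq_add, add_comm]

end Frobenius

section ABW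

variable {d T : ℕ}

lemma memO_one : memO (1 : Mat d T) :=
  ⟨fun _ _ _ _ hts => one_apply_ne fun h => hts (congrArg Prod.fst h), by simp⟩

lemma memO.mul_transpose {O : Mat d T} (hO : memO O) : O * Oᵀ = 1 :=
  mul_eq_one_comm.mp hO.2

lemma memO.transpose {O : Mat d T} (hO : memO O) : memO Oᵀ :=
  ⟨fun t s j i hts => hO.1 s t i j hts.symm, by rw [transpose_transpose, hO.mul_transpose]⟩

lemma memO.mul {O₁ O₂ : Mat d T} (h₁ : memO O₁) (h₂ : memO O₂) : memO (O₁ * O₂) := by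
  refine ⟨fun t s i j hts => ?_, ?_⟩
  · rw [Matrix.mul_apply]
    refine Finset.sum_eq_zero fun ⟨r, k⟩ _ => ?_
    by_cases hrt : r = t
    · rw [hrt, h₂.1 t s k j hts, mul_zero]
    · rw [h₁.1 t r i k (Ne.symm hrt), zero_mul]
  · rw [transpose_mul, Matrix.mul_assoc, ← Matrix.mul_assoc O₁ᵀ, h₁.2, Matrix.one_mul, h₂.2]

lemma isCompact_setOf_memO : IsCompact {O : Mat d T | memO O} := by
  have hbound : {O : Mat d T | memO O} ⊆
      Set.univ.pi fun _ => Set.univ.pi fun _ => Metric.closedBall 0 1 := by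
    intro O hO p _ q _
    have hU : O ∈ unitaryGroup (Fin T × Fin d) ℝ := by
      rw [mem_unitaryGroup_iff', star_eq_conjTranspose, conjTranspose_eq_transpose_of_trivial]
      exact hO.2
    exact mem_closedBall_zero_iff.mpr (entry_norm_bound_of_unitary hU p q)
  have hclosed : IsClosed {O : Mat d T | memO O} := by
    refine IsClosed.inter ?_ (isClosed_eq (continuous_id.matrix_transpose.matrix_mul
      continuous_id) continuous_const)
    show IsClosed {O : Mat d T | ∀ (t s : Fin T) (i j : Fin d), t ≠ s → O (t, i) (s, j) = 0}
    simp only [Set.ofPred_forall]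
    exact isClosed_iInter fun t => isClosed_iInter fun s => isClosed_iInter fun i =>
      isClosed_iInter fun j => isClosed_iInter fun _ =>
        isClosed_eq (continuous_id.matrix_elem _ _) continuous_const
  exact (isCompact_univ_pi fun _ => isCompact_univ_pi fun _ => isCompact_closedBall 0 1)
    |>.of_isClosed_subset hclosed hbound

lemma dABW_eq_sInf_image (X Y : Mat d T) :
    dABW X Y = sInf ((fun O => frobNorm (X - Y * O)) '' {O | memO O}) := by
  simp only [dABW, Set.image, Set.mem_ofPred_eq, eq_comm]

lemma dABW_le (X Y : Mat d T) {O : Mat d T} (hO : memO O) : dABW X Y ≤ frobNorm (X - Y * O) :=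
  csInf_le ⟨0, by rintro r ⟨O, -, rfl⟩; exact Real.sqrt_nonneg _⟩ ⟨O, hO, rfl⟩

lemma OStar_nonempty (X Y : Mat d T) : (OStar X Y).Nonempty := by
  have hcont : Continuous fun O : Mat d T => frobNorm (X - Y * O) :=
    continuous_frobNorm.comp (continuous_const.sub (continuous_const.matrix_mul continuous_id))
  obtain ⟨O, hO, hmin⟩ := (isCompact_setOf_memO.image hcont).sInf_mem ⟨_, 1, memO_one, rfl⟩
  exact ⟨O, hO, hmin.trans (dABW_eq_sInf_image X Y).symm⟩

lemma continuous_dABW (X : Mat d T) : Continuous (dABW X) := by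
  simp only [funext (dABW_eq_sInf_image X)]
  exact isCompact_setOf_memO.continuous_sInf (continuous_frobNorm.comp
    (continuous_const.sub (continuous_fst.matrix_mul continuous_snd)))

lemma isClosed_OStar (X Y : Mat d T) : IsClosed (OStar X Y) :=
  isCompact_setOf_memO.isClosed.inter <| isClosed_eq (continuous_frobNorm.comp
    (continuous_const.sub (continuous_const.matrix_mul continuous_id))) continuous_const

lemma dABW_mul_left (X Y : Mat d T) {O : Mat d T} (hO : memO O) :
    dABW (X * O) Y = dABW X Y := by
  have key : ∀ Q, frobNorm (X * O - Y * Q) = frobNorm (X - Y * (Q * Oᵀ)) := fun Q => by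
    rw [← frobNorm_mul_of_mul_transpose_eq_one (X - Y * (Q * Oᵀ)) hO.mul_transpose, sub_mul, Matrix.mul_assoc Y,
      Matrix.mul_assoc Q, hO.2, Matrix.mul_one]
  simp only [dABW, key]
  congr 1
  ext r
  refine ⟨fun ⟨Q, hQ, hr⟩ => ⟨Q * Oᵀ, hQ.mul hO.transpose, hr⟩, fun ⟨Q, hQ, hr⟩ => ?_⟩
  exact ⟨Q * O, hQ.mul hO, by rw [hr, Matrix.mul_assoc, hO.mul_transpose, Matrix.mul_one]⟩

lemma dABW_eq_zero_iff {X Y : Mat d T} : dABW X Y = 0 ↔ ∃ O, memO O ∧ Y = X * O := by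
  constructor
  · intro h
    obtain ⟨O, hO, hXY⟩ := OStar_nonempty X Y
    rw [h, frobNorm_eq_norm, norm_eq_zero, map_eq_zero_iff _ frobEquiv.injective,
      sub_eq_zero] at hXY
    exact ⟨Oᵀ, hO.transpose, by rw [hXY, Matrix.mul_assoc, hO.mul_transpose, Matrix.mul_one]⟩
  · rintro ⟨O, hO, rfl⟩
    refine le_antisymm ?_ (le_csInf ⟨_, 1, memO_one, rfl⟩ ?_)
    · simpa [Matrix.mul_assoc, hO.mul_transpose, frobNorm] using dABW_le X (X * O) hO.transpose
    · rintro r ⟨Q, -, rfl⟩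
      exact Real.sqrt_nonneg _

lemma exists_mem_OStar_eq_add_smul {X Y Z : Mat d T} {s : ℝ}
    (hXY : frobNorm (X - Y) = s * dABW X Z) (hYZ : dABW Y Z = (1 - s) * dABW X Z) :
    ∃ S ∈ OStar X Z, Y = X + s • (Z * S - X) := by
  obtain ⟨S, hS, hYS⟩ := OStar_nonempty Y Z
  have hXS : frobNorm (X - Z * S) = dABW X Z := by
    refine le_antisymm ?_ (dABW_le X Z hS)
    calc frobNorm (X - Z * S) ≤ frobNorm (X - Y) + frobNorm (Y - Z * S) := frobNorm_sub_le _ _ _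
      _ = dABW X Z := by rw [hXY, hYS, hYZ]; ring
  refine ⟨S, ⟨hS, hXS⟩, eq_add_smul_of_frobNorm_eq ?_ ?_⟩
  · rw [hXY, hXS]
  · rw [hYS, hYZ, hXS]

end ABW

section Geodesic

variable {d T : ℕ}

def IsConstSpeedGeodesic (γ : ℝ → Mat d T) : Prop :=
  ∀ u ∈ Set.Icc (0 : ℝ) 1, ∀ v ∈ Set.Icc (0 : ℝ) 1,
    dABW (γ u) (γ v) = |u - v| * dABW (γ 0) (γ 1)

def interpOptimizers (γ : ℝ → Mat d T) (u : ℝ) : Set (Mat d T) :=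
  {Q | Q ∈ OStar (γ 0) (γ 1) ∧ dABW (γ u) (γ 0 + u • (γ 1 * Q - γ 0)) = 0}

lemma isClosed_interpOptimizers (γ : ℝ → Mat d T) (u : ℝ) : IsClosed (interpOptimizers γ u) :=
  (isClosed_OStar _ _).inter <| isClosed_eq ((continuous_dABW _).comp <| continuous_const.add <|
    ((continuous_const.matrix_mul continuous_id).sub continuous_const).const_smul u)
    continuous_const

namespace IsConstSpeedGeodesic

variable {γ : ℝ → Mat d T} {u v : ℝ}

lemma dABW_eq (h : IsConstSpeedGeodesic γ) (hu : 0 ≤ u) (huv : u ≤ v) (hv : v ≤ 1) :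
    dABW (γ u) (γ v) = (v - u) * dABW (γ 0) (γ 1) := by
  rw [h u ⟨hu, huv.trans hv⟩ v ⟨hu.trans huv, hv⟩, abs_of_nonpos (by linarith), neg_sub]

lemma interpOptimizers_nonempty (h : IsConstSpeedGeodesic γ) (hu₀ : 0 ≤ u) (hu₁ : u ≤ 1) :
    (interpOptimizers γ u).Nonempty := by
  obtain ⟨W, hW, hW_opt⟩ := OStar_nonempty (γ 0) (γ u)
  have h_start : frobNorm (γ 0 - γ u * W) = u * dABW (γ 0) (γ 1) := by
    rw [hW_opt, h.dABW_eq le_rfl hu₀ hu₁, sub_zero]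
  have h_end : dABW (γ u * W) (γ 1) = (1 - u) * dABW (γ 0) (γ 1) := by
    rw [dABW_mul_left _ _ hW, h.dABW_eq hu₀ hu₁ le_rfl]
  obtain ⟨S, hS, hseg⟩ := exists_mem_OStar_eq_add_smul h_start h_end
  exact ⟨S, hS, dABW_eq_zero_iff.mpr ⟨W, hW, hseg.symm⟩⟩

/-- The triangle `[γ 0], [γ u], [γ v]` is degenerate, so the displacement interpolation through
`[γ u]` also passes through `[γ v]`. -/
lemma interpOptimizers_mono (h : IsConstSpeedGeodesic γ) (hu : 0 < u) (huv : u ≤ v)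
    (hv : v ≤ 1) : interpOptimizers γ u ⊆ interpOptimizers γ v := by
  rintro Q ⟨hQ, hQu⟩
  obtain ⟨W, hW, hB⟩ := dABW_eq_zero_iff.mp hQu
  have hv₀ : 0 < v := hu.trans_le huv
  have h_start : frobNorm (γ 0 - (γ 0 + u • (γ 1 * Q - γ 0))) = u / v * dABW (γ 0) (γ v) := by
    rw [sub_add_cancel_left, ← smul_neg, neg_sub, frobNorm_smul, abs_of_pos hu, hQ.2,
      h.dABW_eq le_rfl hv₀.le hv, sub_zero]
    field_simp
  have h_end : dABW (γ 0 + u • (γ 1 * Q - γ 0)) (γ v) = (1 - u / v) * dABW (γ 0) (γ v) := by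
    rw [hB, dABW_mul_left _ _ hW, h.dABW_eq hu.le huv hv, h.dABW_eq le_rfl hv₀.le hv, sub_zero]
    field_simp
  obtain ⟨S, hS, hseg⟩ := exists_mem_OStar_eq_add_smul h_start h_end
  have hvu : v / u * (u / v) = 1 := by field_simp
  refine ⟨hQ, dABW_eq_zero_iff.mpr ⟨S, hS.1, ?_⟩⟩
  calc γ 0 + v • (γ 1 * Q - γ 0) = γ 0 + (v / u) • (u • (γ 1 * Q - γ 0)) := by
        rw [smul_smul, div_mul_cancel₀ _ hu.ne']
    _ = γ 0 + (v / u) • ((u / v) • (γ v * S - γ 0)) := by rw [(add_right_inj _).mp hseg]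
    _ = γ v * S := by
        rw [smul_smul, hvu, one_smul, add_sub_cancel]

lemma exists_forall_mem_interpOptimizers (h : IsConstSpeedGeodesic γ) :
    ∃ Q, ∀ u ∈ Set.Ioc (0 : ℝ) 1, Q ∈ interpOptimizers γ u := by
  have : Nonempty (Set.Ioc (0 : ℝ) 1) := ⟨⟨1, one_pos, le_rfl⟩⟩
  obtain ⟨Q, hQ⟩ := IsCompact.nonempty_iInter_of_directed_nonempty_isCompact_isClosed
    (fun u : Set.Ioc (0 : ℝ) 1 => interpOptimizers γ u)
    (Monotone.directed_ge fun u v huv => h.interpOptimizers_mono u.2.1 huv v.2.2)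
    (fun u => h.interpOptimizers_nonempty u.2.1.le u.2.2)
    (fun u => isCompact_setOf_memO.of_isClosed_subset (isClosed_interpOptimizers γ u)
      fun _ hQ => hQ.1.1)
    (fun u => isClosed_interpOptimizers γ u)
  exact ⟨Q, fun u hu => Set.mem_iInter.mp hQ ⟨u, hu⟩⟩

end IsConstSpeedGeodesic

end Geodesic

theorem stmt11_general (d T : ℕ) (L : Mat d T)
    (γ : ℝ → Mat d T) (hγL : ∀ u ∈ Set.Icc (0 : ℝ) 1, memL (γ u))
    (hγ0 : γ 0 = L)
    (hgeo : ∀ u ∈ Set.Icc (0 : ℝ) 1, ∀ v ∈ Set.Icc (0 : ℝ) 1,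
      dABW (γ u) (γ v) = |u - v| * dABW (γ 0) (γ 1)) :
    ∃ V ∈ VSet L, ∀ u ∈ Set.Icc (0 : ℝ) 1, dABW (γ u) (L + u • V) = 0 := by
  subst hγ0
  obtain ⟨Q, hQ⟩ := IsConstSpeedGeodesic.exists_forall_mem_interpOptimizers hgeo
  refine ⟨γ 1 * Q - γ 0, ⟨γ 1, Q, hγL 1 ⟨zero_le_one, le_rfl⟩, (hQ 1 ⟨one_pos, le_rfl⟩).1, rfl⟩,
    fun u hu => ?_⟩
  rcases hu.1.eq_or_lt with rfl | hu₀
  · rw [zero_smul, add_zero]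
    exact dABW_eq_zero_iff.mpr ⟨1, memO_one, (Matrix.mul_one _).symm⟩
  · exact (hQ u ⟨hu₀, hu.2⟩).2

/-- every constant speed geodesic emanating from `[L]` is a displacement
interpolation `[L + uV]` for some `V ∈ 𝐕(L)`. -/
theorem stmt11 (d T : ℕ) (hd : 0 < d) (hT : 0 < T) (L : Mat d T) (hL : memL L)
    (γ : ℝ → Mat d T) (hγL : ∀ u ∈ Set.Icc (0 : ℝ) 1, memL (γ u))
    (hγ0 : γ 0 = L)
    (hgeo : ∀ u ∈ Set.Icc (0 : ℝ) 1, ∀ v ∈ Set.Icc (0 : ℝ) 1,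
      dABW (γ u) (γ v) = |u - v| * dABW (γ 0) (γ 1)) :
    ∃ V ∈ VSet L, ∀ u ∈ Set.Icc (0 : ℝ) 1, dABW (γ u) (L + u • V) = 0 :=
  stmt11_general d T L γ hγL hγ0 hgeo
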